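/- For x ∈ ℝ with |x| < 1, the bound |(1+x)·ln(1+x) − x − x²/2| ≤ |x|³/(1−|x|) holds; consequently, for a perturbation Q = P + εJ of a strictly positive probability vector P with ∑_s J(s) = 0, the KL divergence satisfies D(Q‖P) = (ε²/2)∑_s J(s)²/P(s) + o(ε²) as ε → 0. -/
import Mathlib

open Filter Real Finset

lemma log_cubic_bound {x : ℝ} (h : |x| < 1) :
    |Real.log (1 + x) - x + x ^ 2 / 2| ≤ |x| ^ 3 / (3 * (1 - |x|)) := by
  have hy : |(-x)| < 1 := by rwa [abs_neg]
  have hs := Real.hasSum_pow_div_log_of_abs_lt_one hy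
  have hx1 : (0:ℝ) < 1 - |x| := by linarith
  set f : ℕ → ℝ := fun n : ℕ => (-x) ^ (n + 1) / (n + 1) with hf
  set T : ℝ := -Real.log (1 - -x) - ∑ i ∈ range 2, f i with hT
  have htail : HasSum (fun n : ℕ => f (n + 2)) T := by
    refine (hasSum_nat_add_iff 2).mpr ?_
    rw [hT, sub_add_cancel]
    exact hs
  have htail' : HasSum (fun n : ℕ => (-x) ^ (n + 3) / ((n : ℝ) + 3)) T := by
    have : (fun n : ℕ => f (n + 2)) = fun n : ℕ => (-x) ^ (n + 3) / ((n : ℝ) + 3) := by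
      funext n; simp only [hf]; push_cast; ring_nf
    rwa [this] at htail
  have hb : HasSum (fun n : ℕ => |x| ^ 3 / 3 * |x| ^ n)
      (|x| ^ 3 / 3 * (1 - |x|)⁻¹) :=
    (hasSum_geometric_of_lt_one (abs_nonneg x) h).mul_left _
  have hbnd : ∀ n : ℕ, |(-x) ^ (n + 3) / ((n : ℝ) + 3)| ≤ |x| ^ 3 / 3 * |x| ^ n := by
    intro n
    rw [abs_div, abs_pow, abs_neg]
    have h3 : (3:ℝ) ≤ |(n : ℝ) + 3| := by
      rw [abs_of_nonneg (by positivity)]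
      have : (0:ℝ) ≤ (n:ℝ) := Nat.cast_nonneg n
      linarith
    calc |x| ^ (n + 3) / |(n : ℝ) + 3| ≤ |x| ^ (n + 3) / 3 :=
          div_le_div_of_nonneg_left (by positivity) (by norm_num) h3
      _ = |x| ^ 3 / 3 * |x| ^ n := by ring
  have hub : T ≤ |x| ^ 3 / 3 * (1 - |x|)⁻¹ :=
    hasSum_le (fun n => (le_abs_self _).trans (hbnd n)) htail' hb
  have hlb : -(|x| ^ 3 / 3 * (1 - |x|)⁻¹) ≤ T :=
    hasSum_le (fun n => neg_le_of_abs_le (hbnd n)) hb.neg htail'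
  have habs : |T| ≤ |x| ^ 3 / 3 * (1 - |x|)⁻¹ := abs_le.2 ⟨hlb, hub⟩
  have heq : T = -(Real.log (1 + x) - x + x ^ 2 / 2) := by
    rw [hT, hf]
    simp [Finset.sum_range_succ, sub_neg_eq_add]
    ring_nf
  rw [heq, abs_neg] at habs
  calc |Real.log (1 + x) - x + x ^ 2 / 2| ≤ |x| ^ 3 / 3 * (1 - |x|)⁻¹ := habs
    _ = |x| ^ 3 / (3 * (1 - |x|)) := by field_simp

lemma main_pointwise {x : ℝ} (h : |x| < 1) :
    |(1 + x) * Real.log (1 + x) - x - x ^ 2 / 2| ≤ |x| ^ 3 / (1 - |x|) := by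
  have hA := log_cubic_bound h
  have hx1 : (0:ℝ) < 1 - |x| := by linarith
  have hx0 : (0:ℝ) < 1 + x := by
    have := neg_abs_le x; linarith
  have key : (1 + x) * Real.log (1 + x) - x - x ^ 2 / 2
      = (1 + x) * (Real.log (1 + x) - x + x ^ 2 / 2) - x ^ 3 / 2 := by ring
  rw [key]
  have hstep : (1 + |x|) * (|x| ^ 3 / (3 * (1 - |x|))) + |x| ^ 3 / 2 ≤ |x| ^ 3 / (1 - |x|) := by
    have hdiff : |x| ^ 3 / (1 - |x|) - ((1 + |x|) * (|x| ^ 3 / (3 * (1 - |x|))) + |x| ^ 3 / 2)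
        = |x| ^ 3 * (1 + |x|) / (6 * (1 - |x|)) := by
      field_simp
      ring
    nlinarith [div_nonneg (mul_nonneg (pow_nonneg (abs_nonneg x) 3)
      (by linarith [abs_nonneg x] : (0:ℝ) ≤ 1 + |x|)) (by linarith : (0:ℝ) ≤ 6 * (1 - |x|))]
  calc |(1 + x) * (Real.log (1 + x) - x + x ^ 2 / 2) - x ^ 3 / 2|
      ≤ |(1 + x) * (Real.log (1 + x) - x + x ^ 2 / 2)| + |x ^ 3 / 2| := abs_sub _ _
    _ = (1 + x) * |Real.log (1 + x) - x + x ^ 2 / 2| + |x| ^ 3 / 2 := by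
        rw [abs_mul, abs_of_pos hx0, abs_div, abs_pow]
        norm_num
    _ ≤ (1 + |x|) * (|x| ^ 3 / (3 * (1 - |x|))) + |x| ^ 3 / 2 := by
        have h1 : (1 + x) ≤ 1 + |x| := by linarith [le_abs_self x]
        have h2 := abs_nonneg (Real.log (1 + x) - x + x ^ 2 / 2)
        nlinarith
    _ ≤ |x| ^ 3 / (1 - |x|) := hstep

theorem stmt_7 {S : Type*} [Fintype S]
    (P J : S → ℝ) (hPpos : ∀ s, 0 < P s) (hPsum : ∑ s, P s = 1)
    (hJ0 : ∑ s, J s = 0) :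
    (∀ x : ℝ, |x| < 1 →
      |(1 + x) * Real.log (1 + x) - x - x ^ 2 / 2| ≤ |x| ^ 3 / (1 - |x|)) ∧
    Filter.Tendsto
      (fun ε : ℝ =>
        ((∑ s, (P s + ε * J s) * Real.log ((P s + ε * J s) / P s)) -
          ε ^ 2 / 2 * ∑ s, (J s) ^ 2 / P s) / ε ^ 2)
      (nhdsWithin 0 {0}ᶜ) (nhds 0) := by
  refine ⟨fun x hx => main_pointwise hx, ?_⟩
  set C1 : ℝ := ∑ s, |J s| / P s with hC1def
  set C2 : ℝ := ∑ s, 2 * |J s| ^ 3 / P s ^ 2 with hC2def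
  have hC1 : 0 ≤ C1 := Finset.sum_nonneg fun s _ => div_nonneg (abs_nonneg _) (hPpos s).le
  have hC2 : 0 ≤ C2 := Finset.sum_nonneg fun s _ => by positivity
  have hδ : (0:ℝ) < 1 / (2 * (C1 + 1)) := by positivity
  apply squeeze_zero_norm' (a := fun ε => C2 * |ε|)
  · have hev : ∀ᶠ ε : ℝ in nhdsWithin 0 {0}ᶜ, |ε| < 1 / (2 * (C1 + 1)) := by
      apply Filter.Eventually.filter_mono nhdsWithin_le_nhds
      have := Metric.ball_mem_nhds (0:ℝ) hδ
      filter_upwards [this] with ε hε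
      simpa [Real.dist_eq] using hε
    filter_upwards [hev, self_mem_nhdsWithin] with ε hεs hεne
    have hεne' : ε ≠ 0 := hεne
    -- per-point smallness
    have hxs : ∀ s, |ε * J s / P s| ≤ 1 / 2 := by
      intro s
      have h1 : |J s| / P s ≤ C1 :=
        Finset.single_le_sum (f := fun s => |J s| / P s)
          (fun s _ => div_nonneg (abs_nonneg _) (hPpos s).le) (Finset.mem_univ s)
      have h2 : |ε * J s / P s| = |ε| * (|J s| / P s) := by
        rw [abs_div, abs_mul, abs_of_pos (hPpos s), mul_div_assoc]
      rw [h2]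
      have h3 : |ε| * (|J s| / P s) ≤ |ε| * C1 :=
        mul_le_mul_of_nonneg_left h1 (abs_nonneg ε)
      have h4 : |ε| * C1 ≤ (1 / (2 * (C1 + 1))) * C1 :=
        mul_le_mul_of_nonneg_right hεs.le hC1
      have h5 : (1 / (2 * (C1 + 1))) * C1 ≤ 1 / 2 := by
        rw [div_mul_eq_mul_div, div_le_div_iff₀ (by positivity) (by norm_num)]
        nlinarith
      linarith
    set G : S → ℝ := fun s => (1 + ε * J s / P s) * Real.log (1 + ε * J s / P s)
      - ε * J s / P s - (ε * J s / P s) ^ 2 / 2 with hGdef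
    have hterm : ∀ s ∈ Finset.univ, P s * G s
        = (P s + ε * J s) * Real.log ((P s + ε * J s) / P s)
          - ε * J s - ε ^ 2 / 2 * (J s ^ 2 / P s) := by
      intro s _
      have hP := (hPpos s).ne'
      have hlog : (P s + ε * J s) / P s = 1 + ε * J s / P s := by field_simp
      rw [hGdef]
      simp only []
      rw [← hlog]
      field_simp
    have hNid : (∑ s, (P s + ε * J s) * Real.log ((P s + ε * J s) / P s)) -
        ε ^ 2 / 2 * ∑ s, (J s) ^ 2 / P s = ∑ s, P s * G s := by
      rw [Finset.sum_congr rfl hterm, Finset.sum_sub_distrib, Finset.sum_sub_distrib,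
        ← Finset.mul_sum, ← Finset.mul_sum, hJ0, mul_zero, sub_zero]
    -- bound each term
    have hbound : ∀ s ∈ Finset.univ, |P s * G s| ≤ |ε| ^ 3 * (2 * |J s| ^ 3 / P s ^ 2) := by
      intro s _
      have hxlt : |ε * J s / P s| < 1 := lt_of_le_of_lt (hxs s) (by norm_num)
      have hG : |G s| ≤ |ε * J s / P s| ^ 3 / (1 - |ε * J s / P s|) := main_pointwise hxlt
      have hhalf : (1:ℝ) / 2 ≤ 1 - |ε * J s / P s| := by linarith [hxs s]
      have hG2 : |G s| ≤ 2 * |ε * J s / P s| ^ 3 := by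
        calc |G s| ≤ |ε * J s / P s| ^ 3 / (1 - |ε * J s / P s|) := hG
          _ ≤ |ε * J s / P s| ^ 3 / (1 / 2) :=
              div_le_div_of_nonneg_left (by positivity) (by norm_num) hhalf
          _ = 2 * |ε * J s / P s| ^ 3 := by ring
      have habs : |ε * J s / P s| = |ε| * |J s| / P s := by
        rw [abs_div, abs_mul, abs_of_pos (hPpos s)]
      rw [abs_mul, abs_of_pos (hPpos s)]
      calc P s * |G s| ≤ P s * (2 * (|ε| * |J s| / P s) ^ 3) := by
            rw [← habs]
            exact mul_le_mul_of_nonneg_left hG2 (hPpos s).le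
        _ = |ε| ^ 3 * (2 * |J s| ^ 3 / P s ^ 2) := by
            have hP := (hPpos s).ne'
            field_simp
    have hNbd : |∑ s, P s * G s| ≤ |ε| ^ 3 * C2 := by
      calc |∑ s, P s * G s| ≤ ∑ s, |P s * G s| := Finset.abs_sum_le_sum_abs _ _
        _ ≤ ∑ s, |ε| ^ 3 * (2 * |J s| ^ 3 / P s ^ 2) := Finset.sum_le_sum hbound
        _ = |ε| ^ 3 * C2 := by rw [hC2def, Finset.mul_sum]
    rw [Real.norm_eq_abs, hNid]
    have hε2 : (0:ℝ) < ε ^ 2 := by positivity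
    rw [abs_div, abs_of_pos hε2, div_le_iff₀ hε2]
    calc |∑ s, P s * G s| ≤ |ε| ^ 3 * C2 := hNbd
      _ = C2 * |ε| * ε ^ 2 := by rw [← sq_abs]; ring
  · have : Filter.Tendsto (fun ε : ℝ => C2 * |ε|) (nhds 0) (nhds (C2 * |0|)) :=
      (continuous_const.mul continuous_abs).tendsto 0
    simpa using this.mono_left nhdsWithin_le_nhds
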